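/- arXiv:1504.04685 — 2 statements merged into one kernel-verified Lean document; each statement's English description precedes it below -/
import Mathlib

section
/- For 2 ≤ m ≤ n, the relative commutant Z(ℂ[H_{m,n}], ℂ[H_{m-1,n}]) = {a ∈ ℂ[H_{m,n}] : ab = ba for all b ∈ ℂ[H_{m-1,n}]} is a commutative algebra. -/
/-- The action of `Equiv.Perm (Fin n)` on `Fin n → G` by permuting coordinates. -/
def wreathHom (G : Type*) [Group G] (n : ℕ) : Equiv.Perm (Fin n) →* MulAut (Fin n → G) where
  toFun π := MulEquiv.arrowCongr π (MulEquiv.refl G)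
  map_one' := by ext f i; rfl
  map_mul' := by intro π σ; ext f i; rfl

/-- The wreath product `G ≀ Sₙ`. -/
abbrev WreathProduct (G : Type*) [Group G] (n : ℕ) :=
  SemidirectProduct (Fin n → G) (Equiv.Perm (Fin n)) (wreathHom G n)

/-- The subgroup `H_{m,n}` of `G ≀ Sₙ` consisting of elements whose permutation part fixes all
1-based points `j` with `m+1 ≤ j ≤ n`, i.e. all 0-based points `j` with `m ≤ j`. -/
noncomputable def Hmn (G : Type*) [Group G] (n m : ℕ) : Subgroup (WreathProduct G n) :=
  Subgroup.comap SemidirectProduct.rightHom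
    (⨅ j : {j : Fin n // m ≤ (j : ℕ)}, MulAction.stabilizer (Equiv.Perm (Fin n)) (j : Fin n))

/-- The group algebra of a subgroup `H ≤ K`, as a subalgebra of `ℂ[K]`. -/
noncomputable def groupSubalgebra (K : Type*) [Group K] (H : Subgroup K) :
    Subalgebra ℂ (MonoidAlgebra ℂ K) :=
  Algebra.adjoin ℂ (Set.range fun h : H => MonoidAlgebra.of ℂ K (h : K))

/-!
Write `K = H_{m,n}`, `H = H_{m-1,n}` and let `A ⊆ ℂ[K]` be the subalgebra generated by the
centres `Z(ℂ[K])` and `Z(ℂ[H])`; it is commutative because `ℂ[H] ⊆ ℂ[K]`. An element of the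
relative commutant is a linear combination of `H`-class sums `∑_{t ∈ H} t y t⁻¹` with `y ∈ K`, so
it suffices that all of these lie in `A`. This goes by induction on the number of points at which
`y` acts nontrivially. If `y ∉ H`, then `y` moves the point `s = m - 1` (0-based), and `y = u v`
where `u` is the labelled cycle of `y` through `s` and `v ∈ H` is the rest. The product of the
`K`-class sum of `u` and the `H`-class sum of `v` lies in `A`. In its expansion, the terms
`(k u k⁻¹)(h v h⁻¹)` in which `k u k⁻¹` still moves `s` and is disjoint from `h v h⁻¹` are
`H`-conjugates of `y`, so their sum is a nonzero multiple of the `H`-class sum of `y`. Every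
other term lies in `H` or acts nontrivially at fewer points, so its `H`-class sum lies in `A` by
induction.
-/

open scoped Classical
open Finset

namespace MonoidAlgebra

section CommSemiring

variable {k K : Type*} [CommSemiring k] [Group K]

theorem coeff_conj_of_commute {b : MonoidAlgebra k K} {t : K} (h : Commute (of k K t) b)
    (w : K) : b.coeff (t * w * t⁻¹) = b.coeff w := by
  simpa [mul_assoc] using congrArg (fun x => x.coeff (t * w)) h.eq.symm

theorem commute_of_support_subset {S : Subgroup K} {b c : MonoidAlgebra k K}
    (hb : ∀ t ∈ S, Commute (of k K t) b) (hc : ↑c.coeff.support ⊆ (S : Set K)) :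
    Commute b c := by
  have hspan : c ∈ Submodule.span k (of k K '' S) :=
    Submodule.span_mono (Set.image_mono hc) (mem_span_support_coeff c)
  clear hc
  induction hspan using Submodule.span_induction with
  | mem x hx =>
    obtain ⟨t, ht, rfl⟩ := hx
    exact (hb t ht).symm
  | zero => exact Commute.zero_right b
  | add x y _ _ hx hy => exact hx.add_right hy
  | smul r x _ hx => exact hx.smul_right r

theorem eq_sum_smul_of (b : MonoidAlgebra k K) :
    b = ∑ w ∈ b.coeff.support, b.coeff w • of k K w := by
  conv_lhs => rw [← sum_coeff_single b]
  simp [Finsupp.sum]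

theorem coeff_sum_of {ι : Type*} (s : Finset ι) (f : ι → K) (w : K) :
    (∑ i ∈ s, of k K (f i)).coeff w = #{i ∈ s | f i = w} := by
  simp [coeff_sum, Finsupp.single_apply, Finset.sum_boole]

theorem exists_eq_of_coeff_sum_of_ne_zero {ι : Type*} {s : Finset ι} {f : ι → K} {w : K}
    (h : (∑ i ∈ s, of k K (f i)).coeff w ≠ 0) : ∃ i ∈ s, f i = w := by
  rw [coeff_sum_of] at h
  obtain ⟨i, hi⟩ := Finset.card_ne_zero.mp (fun h0 => h (by rw [h0, Nat.cast_zero]))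
  exact ⟨i, (Finset.mem_filter.mp hi).1, (Finset.mem_filter.mp hi).2⟩

theorem coeff_sum_of_ne_zero [CharZero k] {ι : Type*} {s : Finset ι} (f : ι → K) {i : ι}
    (hi : i ∈ s) : (∑ j ∈ s, of k K (f j)).coeff (f i) ≠ 0 := by
  rw [coeff_sum_of, Nat.cast_ne_zero, ← Nat.pos_iff_ne_zero, Finset.card_pos]
  exact ⟨i, Finset.mem_filter.mpr ⟨hi, rfl⟩⟩

theorem commute_sum_of {ι : Type*} (s : Finset ι) (f : ι → K) (t : K) (e : ι ≃ ι)
    (he : ∀ i, i ∈ s ↔ e i ∈ s) (hf : ∀ i, f (e i) = t * f i * t⁻¹) :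
    Commute (of k K t) (∑ i ∈ s, of k K (f i)) := by
  rw [Commute, SemiconjBy, Finset.mul_sum, Finset.sum_mul]
  refine Finset.sum_equiv e he fun i _ => ?_
  rw [← map_mul, ← map_mul, hf]
  group

variable (k) in
/-- The centre of `k[S]`, as a subset of `k[K]`. -/
def subgroupAlgebraCenter (S : Subgroup K) : Set (MonoidAlgebra k K) :=
  {b | ↑b.coeff.support ⊆ (S : Set K) ∧ ∀ t ∈ S, Commute (of k K t) b}

variable (k) in
noncomputable def adjoinCenters (S T : Subgroup K) : Subalgebra k (MonoidAlgebra k K) :=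
  Algebra.adjoin k (subgroupAlgebraCenter k S ∪ subgroupAlgebraCenter k T)

theorem isMulCommutative_adjoinCenters {S T : Subgroup K} (hTS : T ≤ S) :
    IsMulCommutative (adjoinCenters k S T) := by
  have hsupp : ∀ x ∈ subgroupAlgebraCenter k S ∪ subgroupAlgebraCenter k T,
      ↑x.coeff.support ⊆ (S : Set K) := by
    rintro x (hx | hx)
    exacts [hx.1, hx.1.trans hTS]
  refine Algebra.isMulCommutative_adjoin k fun x hx y hy => ?_
  rcases hx with hx | hx
  · exact commute_of_support_subset hx.2 (hsupp y hy)
  rcases hy with hy | hy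
  · exact (commute_of_support_subset hy.2 (hsupp x (Or.inr hx))).symm
  · exact commute_of_support_subset hx.2 hy.1

variable [Fintype K]

variable (k) in
noncomputable def conjSum (S : Subgroup K) (y : K) : MonoidAlgebra k K :=
  ∑ t with t ∈ S, of k K (t * y * t⁻¹)

variable {S : Subgroup K}

theorem commute_conjSum {t : K} (ht : t ∈ S) (y : K) :
    Commute (of k K t) (conjSum k S y) :=
  commute_sum_of _ _ t (Equiv.mulLeft t) (by simp [Subgroup.mul_mem_cancel_left S ht])
    (fun _ => by simp only [Equiv.coe_mulLeft, mul_inv_rev]; group)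

theorem conjSum_mem_subgroupAlgebraCenter {y : K} (hy : y ∈ S) :
    conjSum k S y ∈ subgroupAlgebraCenter k S := by
  refine ⟨fun w hw => ?_, fun t ht => commute_conjSum ht y⟩
  obtain ⟨t, ht, rfl⟩ := exists_eq_of_coeff_sum_of_ne_zero (Finsupp.mem_support_iff.mp hw)
  have ht : t ∈ S := (Finset.mem_filter.mp ht).2
  exact S.mul_mem (S.mul_mem ht hy) (S.inv_mem ht)

theorem card_smul_eq_sum_conjSum {b : MonoidAlgebra k K} (hb : ∀ t ∈ S, Commute (of k K t) b) :
    (#{t | t ∈ S} : k) • b = ∑ w ∈ b.coeff.support, b.coeff w • conjSum k S w := by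
  have hconj : ∀ t ∈ S, of k K t * b * of k K t⁻¹ = b := fun t ht => by
    rw [(hb t ht).eq, mul_assoc, ← map_mul, mul_inv_cancel, map_one, mul_one]
  calc (#{t | t ∈ S} : k) • b = ∑ t with t ∈ S, of k K t * b * of k K t⁻¹ := by
        rw [Finset.sum_congr rfl fun t ht => hconj t (Finset.mem_filter.mp ht).2,
          Finset.sum_const, Nat.cast_smul_eq_nsmul]
    _ = ∑ t with t ∈ S, ∑ w ∈ b.coeff.support, b.coeff w • of k K (t * w * t⁻¹) := by
        refine Finset.sum_congr rfl fun t _ => ?_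
        conv_lhs => rw [eq_sum_smul_of b]
        simp only [Finset.mul_sum, Finset.sum_mul, mul_smul_comm, smul_mul_assoc, map_mul]
    _ = ∑ w ∈ b.coeff.support, b.coeff w • conjSum k S w := by
        rw [Finset.sum_comm]
        simp only [conjSum, Finset.smul_sum]

theorem conjSum_mul_conjSum (S T : Subgroup K) (u v : K) :
    conjSum k S u * conjSum k T v =
      ∑ q : K × K with q.1 ∈ S ∧ q.2 ∈ T, of k K (q.1 * u * q.1⁻¹ * (q.2 * v * q.2⁻¹)) := by
  rw [conjSum, conjSum, Finset.sum_mul_sum, ← Finset.sum_product', ← Finset.filter_product,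
    Finset.univ_product_univ]
  simp only [map_mul]

theorem commute_sum_conj_mul_conj {S T H : Subgroup K} (hHS : H ≤ S) (hHT : H ≤ T)
    {t : K} (ht : t ∈ H) (P : K × K → Prop) [DecidablePred P]
    (hP : ∀ q : K × K, P (t * q.1, t * q.2) ↔ P q) (u v : K) :
    Commute (of k K t) (∑ q : K × K with (q.1 ∈ S ∧ q.2 ∈ T) ∧ P q,
      of k K (q.1 * u * q.1⁻¹ * (q.2 * v * q.2⁻¹))) :=
  commute_sum_of _ _ t ((Equiv.mulLeft t).prodCongr (Equiv.mulLeft t))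
    (fun q => by simp [Prod.map, Subgroup.mul_mem_cancel_left S (hHS ht),
      Subgroup.mul_mem_cancel_left T (hHT ht), hP])
    (fun q => by simp only [Equiv.prodCongr_apply, Prod.map, Equiv.coe_mulLeft]; group)

end CommSemiring

variable {k K : Type*} [Field k] [Group K] [Fintype K] {S : Subgroup K}

theorem mem_of_forall_conjSum_mem [CharZero k] {A : Subalgebra k (MonoidAlgebra k K)}
    {b : MonoidAlgebra k K} (hb : ∀ t ∈ S, Commute (of k K t) b)
    (hA : ∀ w ∈ b.coeff.support, conjSum k S w ∈ A) : b ∈ A := by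
  have hcard : (#{t | t ∈ S} : k) ≠ 0 :=
    Nat.cast_ne_zero.mpr (Finset.card_ne_zero.mpr ⟨1, by simp [S.one_mem]⟩)
  rw [← inv_smul_smul₀ hcard b, card_smul_eq_sum_conjSum hb]
  exact A.smul_mem (A.sum_mem fun w hw => A.smul_mem (hA w hw) _) _

theorem conjSum_mem_of_support_subset_orbit {A : Subalgebra k (MonoidAlgebra k K)}
    {b : MonoidAlgebra k K} {y : K} (hbA : b ∈ A) (hb : ∀ t ∈ S, Commute (of k K t) b)
    (hsupp : ∀ w, b.coeff w ≠ 0 → ∃ t ∈ S, t * y * t⁻¹ = w) (hy : b.coeff y ≠ 0) :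
    conjSum k S y ∈ A := by
  have hprop : b.coeff y • conjSum k S y = (conjSum k S y).coeff y • b := by
    ext w
    simp only [coeff_smul, Finsupp.smul_apply, smul_eq_mul]
    by_cases hw : ∃ t ∈ S, t * y * t⁻¹ = w
    · obtain ⟨t, ht, rfl⟩ := hw
      rw [coeff_conj_of_commute (hb t ht), coeff_conj_of_commute (commute_conjSum ht y),
        mul_comm]
    · have hb0 : b.coeff w = 0 := not_imp_comm.mp (hsupp w) hw
      have hc0 : (conjSum k S y).coeff w = 0 := by
        by_contra hc
        obtain ⟨t, ht, hty⟩ := exists_eq_of_coeff_sum_of_ne_zero hc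
        exact hw ⟨t, (Finset.mem_filter.mp ht).2, hty⟩
      rw [hb0, hc0, mul_zero, mul_zero]
  rw [← inv_smul_smul₀ hy (conjSum k S y), hprop]
  exact A.smul_mem (A.smul_mem hbA _) _

end MonoidAlgebra

theorem support_subset_of_mem_groupSubalgebra {K : Type*} [Group K] {S : Subgroup K}
    {a : MonoidAlgebra ℂ K} (ha : a ∈ groupSubalgebra K S) : ↑a.coeff.support ⊆ (S : Set K) := by
  have hclosure : Submonoid.closure (Set.range fun t : S => MonoidAlgebra.of ℂ K t) ≤
      S.toSubmonoid.map (MonoidAlgebra.of ℂ K) :=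
    Submonoid.closure_le.mpr (by rintro _ ⟨t, rfl⟩; exact ⟨t, t.2, rfl⟩)
  have hle : Subalgebra.toSubmodule (groupSubalgebra K S) ≤
      MonoidAlgebra.supported ℂ ℂ (S : Set K) := by
    rw [groupSubalgebra, Algebra.adjoin_eq_span, Submodule.span_le]
    rintro _ hx
    obtain ⟨t, ht, rfl⟩ := hclosure hx
    simpa [MonoidAlgebra.mem_supported] using ht
  exact MonoidAlgebra.mem_supported.mp (hle ha)

theorem Equiv.Perm.exists_eqOn_and_fixed_outside_union_map {α : Type*} [DecidableEq α]
    (π : Equiv.Perm α) (A : Finset α) : ∃ σ : Equiv.Perm α,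
      (∀ a ∈ A, σ a = π a) ∧ ∀ a, a ∉ A → a ∉ A.map π.toEmbedding → σ a = a := by
  set B := A ∪ A.map π.toEmbedding
  have hmaps : Set.MapsTo (fun x : B => π x) {x : B | (x : α) ∈ A} B := fun x hx =>
    Finset.mem_union_right _ (Finset.mem_map_of_mem _ hx)
  have hinj : Set.InjOn (fun x : B => π x) {x : B | (x : α) ∈ A} := fun x _ y _ hxy =>
    Subtype.ext (π.injective hxy)
  obtain ⟨g, hg⟩ := hmaps.exists_equiv_extend_of_card_eq (Fintype.card_coe B) hinj
  refine ⟨Equiv.Perm.ofSubtype g, fun a ha => ?_, fun a haA haπ => ?_⟩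
  · rw [Equiv.Perm.ofSubtype_apply_of_mem g (Finset.mem_union_left _ ha)]
    exact hg ⟨a, _⟩ ha
  · exact Equiv.Perm.ofSubtype_apply_of_not_mem g fun h => (Finset.mem_union.mp h).elim haA haπ

instance (G : Type*) [Group G] [Fintype G] (n : ℕ) : Fintype (WreathProduct G n) :=
  Fintype.ofEquiv _ SemidirectProduct.equivProd.symm

namespace WreathProduct

section Support

variable {G : Type*} [Group G] {n : ℕ}

@[simp]
theorem mul_left_apply (x y : WreathProduct G n) (p : Fin n) :
    (x * y).left p = x.left p * y.left (x.right⁻¹ p) := rfl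

@[simp]
theorem inv_left_apply (x : WreathProduct G n) (p : Fin n) :
    x⁻¹.left p = (x.left (x.right p))⁻¹ := by
  simp [SemidirectProduct.inv_left, wreathHom, MulEquiv.arrowCongr, Equiv.Perm.inv_def]

noncomputable def support (x : WreathProduct G n) : Finset (Fin n) :=
  {p | x.right p ≠ p ∨ x.left p ≠ 1}

variable {x y t : WreathProduct G n} {p : Fin n}

theorem mem_support : p ∈ support x ↔ x.right p ≠ p ∨ x.left p ≠ 1 := by
  simp [support]

theorem notMem_support : p ∉ support x ↔ x.right p = p ∧ x.left p = 1 := by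
  simp [support]

theorem right_apply_mem_support : x.right p ∈ support x ↔ p ∈ support x := by
  by_cases hp : x.right p = p
  · rw [hp]
  · have hp' : x.right (x.right p) ≠ x.right p := fun h => hp (x.right.injective h)
    exact iff_of_true (mem_support.mpr (Or.inl hp')) (mem_support.mpr (Or.inl hp))

theorem right_inv_apply_mem_support : x.right⁻¹ p ∈ support x ↔ p ∈ support x := by
  conv_rhs => rw [← x.right.apply_symm_apply p]
  exact right_apply_mem_support.symm


theorem mem_support_conj : p ∈ support (t * x * t⁻¹) ↔ t.right⁻¹ p ∈ support x := by
  obtain ⟨q, rfl⟩ := t.right.surjective p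
  by_cases hq : x.right q = q
  · have hq' : x.right.symm q = q := by rw [Equiv.symm_apply_eq, hq]
    simp [mem_support, hq, hq', conj_eq_one_iff]
  · simp [mem_support, hq]

theorem support_conj : support (t * x * t⁻¹) = (support x).map t.right.toEmbedding := by
  ext p
  rw [mem_support_conj, Finset.mem_map_equiv]
  rfl

theorem card_support_conj : #(support (t * x * t⁻¹)) = #(support x) := by
  rw [support_conj, Finset.card_map]

theorem support_mul_subset : support (x * y) ⊆ support x ∪ support y := by
  intro p hp
  by_contra hxy
  simp only [Finset.mem_union, not_or, notMem_support] at hxy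
  obtain ⟨⟨hxr, hxl⟩, hyr, hyl⟩ := hxy
  have hxr' : x.right⁻¹ p = p := by rw [Equiv.Perm.inv_eq_iff_eq, hxr]
  simp [mem_support, hxr, hxl, hyr, hyl, hxr'] at hp

theorem apply_notMem_support_of_disjoint (h : Disjoint (support x) (support y))
    (hp : p ∉ support y) : x.right p ∉ support y ∧ x.right⁻¹ p ∉ support y := by
  by_cases hpx : p ∈ support x
  · exact ⟨Finset.disjoint_left.mp h (right_apply_mem_support.mpr hpx),
      Finset.disjoint_left.mp h (right_inv_apply_mem_support.mpr hpx)⟩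
  · have hr := (notMem_support.mp hpx).1
    have hr' : x.right⁻¹ p = p := by rw [Equiv.Perm.inv_eq_iff_eq, hr]
    rw [hr, hr']
    exact ⟨hp, hp⟩

theorem mul_apply_of_notMem_support_right (h : Disjoint (support x) (support y))
    (hp : p ∉ support y) : (x * y).right p = x.right p ∧ (x * y).left p = x.left p := by
  have hy := (notMem_support.mp hp).1
  have hy' := (notMem_support.mp (apply_notMem_support_of_disjoint h hp).2).2
  simpa [SemidirectProduct.mul_right, hy] using hy'

theorem mul_apply_of_notMem_support_left (h : Disjoint (support x) (support y))
    (hp : p ∉ support y) : (y * x).right p = x.right p ∧ (y * x).left p = x.left p := by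
  obtain ⟨hyr, hyl⟩ := notMem_support.mp hp
  have hyr' : y.right⁻¹ p = p := by rw [Equiv.Perm.inv_eq_iff_eq, hyr]
  have hy := (notMem_support.mp (apply_notMem_support_of_disjoint h hp).1).1
  simp [SemidirectProduct.mul_right, hyl, hyr', hy]

theorem commute_of_disjoint (h : Disjoint (support x) (support y)) : Commute x y := by
  have hagree : ∀ p, (x * y).right p = (y * x).right p ∧ (x * y).left p = (y * x).left p := by
    intro p
    by_cases hp : p ∈ support y
    · have hpx : p ∉ support x := Finset.disjoint_right.mp h hp
      obtain ⟨h1, h2⟩ := mul_apply_of_notMem_support_left h.symm hpx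
      obtain ⟨h3, h4⟩ := mul_apply_of_notMem_support_right h.symm hpx
      exact ⟨h1.trans h3.symm, h2.trans h4.symm⟩
    · obtain ⟨h1, h2⟩ := mul_apply_of_notMem_support_right h hp
      obtain ⟨h3, h4⟩ := mul_apply_of_notMem_support_left h hp
      exact ⟨h1.trans h3.symm, h2.trans h4.symm⟩
  exact SemidirectProduct.ext (funext fun p => (hagree p).2) (Equiv.ext fun p => (hagree p).1)

theorem support_mul_of_disjoint (h : Disjoint (support x) (support y)) :
    support (x * y) = support x ∪ support y := by
  refine subset_antisymm support_mul_subset fun p hp => ?_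
  rcases Finset.mem_union.mp hp with hpx | hpy
  · obtain ⟨h1, h2⟩ := mul_apply_of_notMem_support_right h (Finset.disjoint_left.mp h hpx)
    rw [mem_support, h1, h2]
    exact mem_support.mp hpx
  · obtain ⟨h1, h2⟩ :=
      mul_apply_of_notMem_support_left h.symm (Finset.disjoint_right.mp h hpy)
    rw [mem_support, h1, h2]
    exact mem_support.mp hpy

theorem exists_conj_eq_conj_support_subset (h v : WreathProduct G n) :
    ∃ t : WreathProduct G n, t * v * t⁻¹ = h * v * h⁻¹ ∧
      support t ⊆ support v ∪ support (h * v * h⁻¹) ∧ ∀ p, h.right p = p → t.right p = p := by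
  set v' := h * v * h⁻¹
  obtain ⟨σ, hσv, hσout⟩ := h.right.exists_eqOn_and_fixed_outside_union_map (support v)
  rw [← support_conj] at hσout
  -- `t` is `h` cut down to `support v`, so that `h⁻¹ * t` is trivial on `support v`
  let t : WreathProduct G n := ⟨fun p => if p ∈ support v' then h.left p else 1, σ⟩
  have hdisj : Disjoint (support (h⁻¹ * t)) (support v) := by
    refine Finset.disjoint_right.mpr fun p hp => notMem_support.mpr ⟨?_, ?_⟩
    · simp [SemidirectProduct.mul_right, t, hσv p hp]
    · have hhp : h.right p ∈ support v' := mem_support_conj.mpr (by simpa using hp)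
      simp [t, hhp]
  refine ⟨t, ?_, fun p hp => ?_, fun p hp => ?_⟩
  · calc t * v * t⁻¹ = h * ((h⁻¹ * t) * v * (h⁻¹ * t)⁻¹) * h⁻¹ := by group
      _ = v' := by rw [(commute_of_disjoint hdisj).eq, mul_inv_cancel_right]
  · by_contra hpn
    rw [Finset.mem_union, not_or] at hpn
    have hl : t.left p = 1 := if_neg hpn.2
    exact (mem_support.mp hp).elim (· (hσout p hpn.1 hpn.2)) (· hl)
  · by_cases hpv : p ∈ support v
    · rw [show t.right p = σ p from rfl, hσv p hpv, hp]
    · refine hσout p hpv fun hpv' => hpv ?_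
      have hp' : h.right⁻¹ p = p := by rw [Equiv.Perm.inv_eq_iff_eq, hp]
      rwa [mem_support_conj, hp'] at hpv'

theorem conj_right_apply_eq_self_iff (ht : t.right p = p) :
    (t * x * t⁻¹).right p = p ↔ x.right p = p := by
  conv_lhs => rw [← ht]
  simp [SemidirectProduct.mul_right]

noncomputable def cyclePart (y : WreathProduct G n) (s : Fin n) : WreathProduct G n :=
  ⟨fun p => if y.right.SameCycle s p then y.left p else 1, y.right.cycleOf s⟩

noncomputable def cycleCompl (y : WreathProduct G n) (s : Fin n) : WreathProduct G n :=
  (cyclePart y s)⁻¹ * y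

variable {s : Fin n}

theorem cyclePart_mul_cycleCompl (y : WreathProduct G n) (s : Fin n) :
    cyclePart y s * cycleCompl y s = y :=
  mul_inv_cancel_left _ _

theorem cyclePart_right_apply_eq_self (hp : y.right p = p) : (cyclePart y s).right p = p := by
  simp [cyclePart, Equiv.Perm.cycleOf_apply, hp]

theorem sameCycle_of_mem_support_cyclePart (hp : p ∈ support (cyclePart y s)) :
    y.right.SameCycle s p := by
  by_contra hsc
  simp [mem_support, cyclePart, Equiv.Perm.cycleOf_apply, hsc] at hp

theorem cycleCompl_apply_of_sameCycle (hp : y.right.SameCycle s p) :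
    (cycleCompl y s).right p = p ∧ (cycleCompl y s).left p = 1 := by
  have hyp : y.right.SameCycle s (y.right p) := Equiv.Perm.sameCycle_apply_right.mpr hp
  have hc : y.right.cycleOf s p = y.right p := by rw [Equiv.Perm.cycleOf_apply, if_pos hp]
  constructor
  · simp [cycleCompl, cyclePart, SemidirectProduct.mul_right, Equiv.Perm.inv_def,
      Equiv.symm_apply_eq, hc]
  · simp [cycleCompl, cyclePart, hc, hyp]

theorem cycleCompl_right_apply_self : (cycleCompl y s).right s = s :=
  (cycleCompl_apply_of_sameCycle (Equiv.Perm.SameCycle.refl _ _)).1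

theorem disjoint_support_cyclePart_cycleCompl :
    Disjoint (support (cyclePart y s)) (support (cycleCompl y s)) :=
  Finset.disjoint_left.mpr fun _ hp =>
    notMem_support.mpr (cycleCompl_apply_of_sameCycle (sameCycle_of_mem_support_cyclePart hp))

theorem card_support_cyclePart_add_cycleCompl :
    #(support (cyclePart y s)) + #(support (cycleCompl y s)) = #(support y) := by
  conv_rhs => rw [← cyclePart_mul_cycleCompl y s]
  rw [support_mul_of_disjoint disjoint_support_cyclePart_cycleCompl,
    Finset.card_union_of_disjoint disjoint_support_cyclePart_cycleCompl]

variable {k h : WreathProduct G n} {m : ℕ}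

theorem mem_Hmn : x ∈ Hmn G n m ↔ ∀ p : Fin n, m ≤ (p : ℕ) → x.right p = p := by
  simp [Hmn, Subgroup.mem_iInf, MulAction.mem_stabilizer_iff, Equiv.Perm.smul_def]

theorem Hmn_mono {m₁ m₂ : ℕ} (hle : m₁ ≤ m₂) : Hmn G n m₁ ≤ Hmn G n m₂ :=
  fun _ hx => mem_Hmn.mpr fun p hp => mem_Hmn.mp hx p (hle.trans hp)

theorem mem_Hmn_iff_mem_Hmn_succ : x ∈ Hmn G n s ↔ x ∈ Hmn G n (s + 1) ∧ x.right s = s := by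
  simp only [mem_Hmn]
  refine ⟨fun hx => ⟨fun p hp => hx p (by omega), hx s le_rfl⟩, fun ⟨hx, hxs⟩ p hp => ?_⟩
  rcases (show (s : ℕ) = p ∨ s + 1 ≤ (p : ℕ) by omega) with hps | hps
  · rwa [← Fin.ext hps]
  · exact hx p hps

theorem cyclePart_mem_Hmn (hy : y ∈ Hmn G n m) : cyclePart y s ∈ Hmn G n m :=
  mem_Hmn.mpr fun p hp => cyclePart_right_apply_eq_self (mem_Hmn.mp hy p hp)

theorem cycleCompl_mem_Hmn (hy : y ∈ Hmn G n (s + 1)) : cycleCompl y s ∈ Hmn G n s :=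
  mem_Hmn_iff_mem_Hmn_succ.mpr
    ⟨mul_mem (inv_mem (cyclePart_mem_Hmn hy)) hy, cycleCompl_right_apply_self⟩

theorem exists_mem_Hmn_conj_cyclePart_eq (hy : y ∈ Hmn G n (s + 1)) (hk : k ∈ Hmn G n (s + 1))
    (hs : (k * cyclePart y s * k⁻¹).right s ≠ s) :
    ∃ h ∈ Hmn G n s, h * cyclePart y s * h⁻¹ = k * cyclePart y s * k⁻¹ := by
  set u := cyclePart y s
  have hmoved : y.right.cycleOf s (k.right⁻¹ s) ≠ k.right⁻¹ s := fun hfix =>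
    hs (by simpa [u, cyclePart, SemidirectProduct.mul_right] using congrArg k.right hfix)
  obtain ⟨j, hj⟩ : y.right.SameCycle s (k.right⁻¹ s) := by
    by_contra hsc
    rw [Equiv.Perm.cycleOf_apply, if_neg hsc] at hmoved
    exact hmoved rfl
  have hright : (k * u ^ j).right s = s := by
    rw [SemidirectProduct.mul_right, ← SemidirectProduct.rightHom_eq_right, map_zpow,
      SemidirectProduct.rightHom_eq_right]
    simp [u, cyclePart, hj]
  refine ⟨k * u ^ j, mem_Hmn_iff_mem_Hmn_succ.mpr
    ⟨mul_mem hk (zpow_mem (cyclePart_mem_Hmn hy) j), hright⟩, ?_⟩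
  rw [mul_assoc k, ((Commute.refl u).zpow_left j).eq]
  group

/-- For `y = u v` split at the cycle through `s`: the pairs `(k, h)` for which `k u k⁻¹` still
moves `s` and is disjoint from `h v h⁻¹`, which makes `(k u k⁻¹)(h v h⁻¹)` an
`H_{s,n}`-conjugate of `y`. -/
def SplitsLike (y : WreathProduct G n) (s : Fin n) (q : WreathProduct G n × WreathProduct G n) :
    Prop :=
  (q.1 * cyclePart y s * q.1⁻¹).right s ≠ s ∧
    Disjoint (support (q.1 * cyclePart y s * q.1⁻¹)) (support (q.2 * cycleCompl y s * q.2⁻¹))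

theorem splitsLike_mul_iff (ht : t ∈ Hmn G n s) (q : WreathProduct G n × WreathProduct G n) :
    SplitsLike y s (t * q.1, t * q.2) ↔ SplitsLike y s q := by
  have hts : t.right s = s := (mem_Hmn_iff_mem_Hmn_succ.mp ht).2
  have hconj : ∀ a b : WreathProduct G n, t * a * b * (t * a)⁻¹ = t * (a * b * a⁻¹) * t⁻¹ :=
    fun _ _ => by group
  simp only [SplitsLike, hconj, ne_eq]
  rw [conj_right_apply_eq_self_iff hts, support_conj (t := t), support_conj (t := t),
    Finset.disjoint_map]

theorem exists_mem_Hmn_conj_eq_of_splitsLike (hy : y ∈ Hmn G n (s + 1))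
    (hk : k ∈ Hmn G n (s + 1)) (hh : h ∈ Hmn G n s) (hq : SplitsLike y s (k, h)) :
    ∃ g ∈ Hmn G n s,
      g * y * g⁻¹ = k * cyclePart y s * k⁻¹ * (h * cycleCompl y s * h⁻¹) := by
  obtain ⟨h₁, hh₁, hu⟩ := exists_mem_Hmn_conj_cyclePart_eq hy hk hq.1
  have hh₂ : h₁⁻¹ * h ∈ Hmn G n s := mul_mem (inv_mem hh₁) hh
  obtain ⟨t, htv, htsupp, htfix⟩ := exists_conj_eq_conj_support_subset (h₁⁻¹ * h) (cycleCompl y s)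
  set u := cyclePart y s
  set v := cycleCompl y s
  have huv : u * v = y := cyclePart_mul_cycleCompl y s
  have ht : t ∈ Hmn G n s :=
    mem_Hmn.mpr fun p hp => htfix p (mem_Hmn.mp hh₂ p hp)
  have hdisj : Disjoint (support u) (support ((h₁⁻¹ * h) * v * (h₁⁻¹ * h)⁻¹)) := by
    rw [← Finset.disjoint_map h₁.right.toEmbedding, ← support_conj, ← support_conj, hu,
      show h₁ * (h₁⁻¹ * h * v * (h₁⁻¹ * h)⁻¹) * h₁⁻¹ = h * v * h⁻¹ by group]
    exact hq.2
  have htu : t * u * t⁻¹ = u := by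
    refine (commute_of_disjoint (Finset.disjoint_of_subset_left htsupp ?_)).eq ▸
      mul_inv_cancel_right u t
    exact Finset.disjoint_union_left.mpr ⟨disjoint_support_cyclePart_cycleCompl.symm, hdisj.symm⟩
  refine ⟨h₁ * t, mul_mem hh₁ ht, ?_⟩
  calc h₁ * t * y * (h₁ * t)⁻¹ = h₁ * ((t * u * t⁻¹) * (t * v * t⁻¹)) * h₁⁻¹ := by
        rw [← huv]; group
    _ = k * u * k⁻¹ * (h * v * h⁻¹) := by rw [htu, htv, ← hu]; group

theorem mem_Hmn_or_card_support_lt (hy : y ∈ Hmn G n (s + 1))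
    (hk : k ∈ Hmn G n (s + 1)) (hh : h ∈ Hmn G n s) (hq : ¬SplitsLike y s (k, h)) :
    k * cyclePart y s * k⁻¹ * (h * cycleCompl y s * h⁻¹) ∈ Hmn G n s ∨
      #(support (k * cyclePart y s * k⁻¹ * (h * cycleCompl y s * h⁻¹))) < #(support y) := by
  set X := k * cyclePart y s * k⁻¹
  set Y := h * cycleCompl y s * h⁻¹
  have hY : Y ∈ Hmn G n s := mul_mem (mul_mem hh (cycleCompl_mem_Hmn hy)) (inv_mem hh)
  by_cases hXs : X.right s = s
  · have hX : X ∈ Hmn G n (s + 1) := mul_mem (mul_mem hk (cyclePart_mem_Hmn hy)) (inv_mem hk)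
    exact Or.inl (mul_mem (mem_Hmn_iff_mem_Hmn_succ.mpr ⟨hX, hXs⟩) hY)
  right
  have hmeet : (support X ∩ support Y).Nonempty :=
    Finset.not_disjoint_iff_nonempty_inter.mp fun hd => hq ⟨hXs, hd⟩
  calc #(support (X * Y)) ≤ #(support X ∪ support Y) := Finset.card_le_card support_mul_subset
    _ < #(support X) + #(support Y) := by
        have := Finset.card_union_add_card_inter (support X) (support Y)
        have := hmeet.card_pos
        omega
    _ = #(support y) := by
        rw [card_support_conj, card_support_conj, card_support_cyclePart_add_cycleCompl]

end Support

section GroupAlgebra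

open MonoidAlgebra

variable {k : Type*} [Field k] {G : Type*} [Group G] [Fintype G] {n : ℕ} {s : Fin n}
  {y : WreathProduct G n}

variable (k) in
noncomputable def pairSum (y : WreathProduct G n) (s : Fin n)
    (P : WreathProduct G n × WreathProduct G n → Prop) [DecidablePred P] :
    MonoidAlgebra k (WreathProduct G n) :=
  ∑ q : WreathProduct G n × WreathProduct G n with
      (q.1 ∈ Hmn G n (s + 1) ∧ q.2 ∈ Hmn G n s) ∧ P q,
    of k _ (q.1 * cyclePart y s * q.1⁻¹ * (q.2 * cycleCompl y s * q.2⁻¹))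

theorem pairSum_add_pairSum_not (P : WreathProduct G n × WreathProduct G n → Prop)
    [DecidablePred P] :
    pairSum k y s P + pairSum k y s (¬P ·) =
      conjSum k (Hmn G n (s + 1)) (cyclePart y s) * conjSum k (Hmn G n s) (cycleCompl y s) := by
  rw [conjSum_mul_conjSum, ← Finset.sum_filter_add_sum_filter_not _ P, Finset.filter_filter,
    Finset.filter_filter]
  rfl

theorem commute_pairSum {P : WreathProduct G n × WreathProduct G n → Prop} [DecidablePred P]
    (hP : ∀ t ∈ Hmn G n s, ∀ q, P (t * q.1, t * q.2) ↔ P q) :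
    ∀ t ∈ Hmn G n s, Commute (of k _ t) (pairSum k y s P) := fun t ht =>
  commute_sum_conj_mul_conj (Hmn_mono (Nat.le_succ s)) le_rfl ht P (hP t ht) _ _

theorem pairSum_not_splitsLike_mem [CharZero k] (hy : y ∈ Hmn G n (s + 1))
    (ih : ∀ w ∈ Hmn G n (s + 1), #(support w) < #(support y) →
      conjSum k (Hmn G n s) w ∈ adjoinCenters k (Hmn G n (s + 1)) (Hmn G n s)) :
    pairSum k y s (¬SplitsLike y s ·) ∈ adjoinCenters k (Hmn G n (s + 1)) (Hmn G n s) := by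
  refine mem_of_forall_conjSum_mem
    (commute_pairSum fun t ht q => (splitsLike_mul_iff ht q).not) fun w hw => ?_
  obtain ⟨⟨k', h'⟩, hq, rfl⟩ :=
    exists_eq_of_coeff_sum_of_ne_zero (Finsupp.mem_support_iff.mp hw)
  obtain ⟨⟨hk', hh'⟩, hbad⟩ := (Finset.mem_filter.mp hq).2
  rcases mem_Hmn_or_card_support_lt hy hk' hh' hbad with hH | hlt
  · exact Algebra.subset_adjoin (Or.inr (conjSum_mem_subgroupAlgebraCenter hH))
  · refine ih _ (mul_mem ?_ ?_) hlt
    · exact mul_mem (mul_mem hk' (cyclePart_mem_Hmn hy)) (inv_mem hk')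
    · have hh'' := Hmn_mono (Nat.le_succ s) hh'
      exact mul_mem (mul_mem hh'' (Hmn_mono (Nat.le_succ s) (cycleCompl_mem_Hmn hy)))
        (inv_mem hh'')

theorem conjSum_mem_of_pairSum_splitsLike_mem [CharZero k] {A : Subalgebra k _}
    (hy : y ∈ Hmn G n (s + 1)) (hys : y.right s ≠ s) (hA : pairSum k y s (SplitsLike y s) ∈ A) :
    conjSum k (Hmn G n s) y ∈ A := by
  refine conjSum_mem_of_support_subset_orbit hA
    (commute_pairSum fun t ht q => splitsLike_mul_iff ht q) (fun w hw => ?_) ?_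
  · obtain ⟨⟨k', h'⟩, hq, rfl⟩ := exists_eq_of_coeff_sum_of_ne_zero hw
    obtain ⟨⟨hk', hh'⟩, hgood⟩ := (Finset.mem_filter.mp hq).2
    exact exists_mem_Hmn_conj_eq_of_splitsLike hy hk' hh' hgood
  · have hgood : SplitsLike y s (1, 1) := by
      refine ⟨?_, ?_⟩
      · simpa [cyclePart, Equiv.Perm.cycleOf_apply_self] using hys
      · simpa using disjoint_support_cyclePart_cycleCompl
    have hmem : ((1, 1) : WreathProduct G n × WreathProduct G n) ∈
        ({q | (q.1 ∈ Hmn G n (s + 1) ∧ q.2 ∈ Hmn G n s) ∧ SplitsLike y s q} : Finset _) := by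
      simp [hgood, one_mem]
    have hcoeff := coeff_sum_of_ne_zero (k := k)
      (fun q => q.1 * cyclePart y s * q.1⁻¹ * (q.2 * cycleCompl y s * q.2⁻¹)) hmem
    simp only [one_mul, inv_one, mul_one, cyclePart_mul_cycleCompl] at hcoeff
    exact hcoeff

theorem conjSum_mem_adjoinCenters [CharZero k] (hy : y ∈ Hmn G n (s + 1)) :
    conjSum k (Hmn G n s) y ∈ adjoinCenters k (Hmn G n (s + 1)) (Hmn G n s) := by
  induction hd : #(support y) using Nat.strong_induction_on generalizing y with
  | _ d ih =>
  by_cases hyH : y ∈ Hmn G n s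
  · exact Algebra.subset_adjoin (Or.inr (conjSum_mem_subgroupAlgebraCenter hyH))
  have hys : y.right s ≠ s := fun h => hyH (mem_Hmn_iff_mem_Hmn_succ.mpr ⟨hy, h⟩)
  have hbad := pairSum_not_splitsLike_mem (k := k) hy fun w hw hlt => ih _ (hd ▸ hlt) hw rfl
  have hprod : conjSum k (Hmn G n (s + 1)) (cyclePart y s) * conjSum k (Hmn G n s)
      (cycleCompl y s) ∈ adjoinCenters k (Hmn G n (s + 1)) (Hmn G n s) :=
    mul_mem
      (Algebra.subset_adjoin (Or.inl (conjSum_mem_subgroupAlgebraCenter (cyclePart_mem_Hmn hy))))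
      (Algebra.subset_adjoin (Or.inr (conjSum_mem_subgroupAlgebraCenter (cycleCompl_mem_Hmn hy))))
  refine conjSum_mem_of_pairSum_splitsLike_mem hy hys ?_
  rw [← add_sub_cancel_right (pairSum k y s (SplitsLike y s)), pairSum_add_pairSum_not]
  exact sub_mem hprod hbad

theorem mem_adjoinCenters_of_mem_relativeCommutant {a : MonoidAlgebra ℂ (WreathProduct G n)}
    (ha : a ∈ groupSubalgebra (WreathProduct G n) (Hmn G n (s + 1)))
    (hc : a ∈ Subalgebra.centralizer ℂ
      ((groupSubalgebra (WreathProduct G n) (Hmn G n s) :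
        Subalgebra ℂ (MonoidAlgebra ℂ (WreathProduct G n))) : Set _)) :
    a ∈ adjoinCenters ℂ (Hmn G n (s + 1)) (Hmn G n s) :=
  mem_of_forall_conjSum_mem
    (fun t ht => (Subalgebra.mem_centralizer_iff ℂ).mp hc _ (Algebra.subset_adjoin ⟨⟨t, ht⟩, rfl⟩))
    fun _ hw => conjSum_mem_adjoinCenters (support_subset_of_mem_groupSubalgebra ha hw)

end GroupAlgebra

end WreathProduct

/-- For `2 ≤ m ≤ n`, the relative commutant `Z(ℂ[H_{m,n}], ℂ[H_{m-1,n}])`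
is commutative. -/
theorem relative_commutant_commutative (G : Type) [Group G] [Fintype G]
    (n m : ℕ) (h2 : 2 ≤ m) (hmn : m ≤ n) :
    ∀ a b : MonoidAlgebra ℂ (WreathProduct G n),
      a ∈ groupSubalgebra (WreathProduct G n) (Hmn G n m) ⊓
        Subalgebra.centralizer ℂ
          ((groupSubalgebra (WreathProduct G n) (Hmn G n (m - 1)) :
            Subalgebra ℂ (MonoidAlgebra ℂ (WreathProduct G n))) : Set _) →
      b ∈ groupSubalgebra (WreathProduct G n) (Hmn G n m) ⊓
        Subalgebra.centralizer ℂ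
          ((groupSubalgebra (WreathProduct G n) (Hmn G n (m - 1)) :
            Subalgebra ℂ (MonoidAlgebra ℂ (WreathProduct G n))) : Set _) →
      a * b = b * a := by
  intro a b ha hb
  obtain ⟨s, rfl⟩ : ∃ s : Fin n, (s : ℕ) + 1 = m := ⟨⟨m - 1, by omega⟩, by simp; omega⟩
  rw [Nat.add_sub_cancel] at ha hb
  have := MonoidAlgebra.isMulCommutative_adjoinCenters (k := ℂ)
    (WreathProduct.Hmn_mono (G := G) (n := n) (Nat.le_succ s))
  exact setLike_mul_comm (WreathProduct.mem_adjoinCenters_of_mem_relativeCommutant ha.1 ha.2)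
    (WreathProduct.mem_adjoinCenters_of_mem_relativeCommutant hb.1 hb.2)
end

section
/- For 1 ≤ i ≤ n−1, let A_i be the subalgebra of ℂ[G≀S_n] generated by the group elements of the subgroup Gⁿ (embedded with identity permutation), the Coxeter transposition s_i = (i,i+1), and the Young–Jucys–Murphy elements X_i and X_{i+1}. Then A_i is a semisimple algebra, and on any finite-dimensional A_i-module the actions of X_i and X_{i+1} are simultaneously diagonalizable. -/
/-- `g^{(i)}` : the element of `G ≀ Sₙ` with `g` in the `i`-th coordinate. -/
def gAt {G : Type*} [Group G] {n : ℕ} (i : Fin n) (g : G) : WreathProduct G n :=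
  SemidirectProduct.inl (Pi.mulSingle i g)

/-- A permutation viewed inside `G ≀ Sₙ`. -/
def pIn {G : Type*} [Group G] {n : ℕ} (π : Equiv.Perm (Fin n)) : WreathProduct G n :=
  SemidirectProduct.inr π

/-- The Young–Jucys–Murphy element with 0-based index: for `i : Fin n`, `YJM G n i` is the
element `X_{i+1}` (1-based), namely `X_{i+1} = Σ_{k<i} Σ_{g∈G} (g⁻¹)^{(k)} g^{(i)} (k,i)`. -/
noncomputable def YJM (G : Type*) [Group G] [Fintype G] (n : ℕ) (i : Fin n) :
    MonoidAlgebra ℂ (WreathProduct G n) :=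
  ∑ k ∈ Finset.univ.filter (fun k : Fin n => k < i), ∑ g : G,
    MonoidAlgebra.of ℂ (WreathProduct G n)
      (gAt k g⁻¹ * gAt i g * pIn (Equiv.swap k i))

/-- Generating set of the algebra `A_i`: the group elements of `Gⁿ` (with identity
permutation), the Coxeter transposition `s = (a, b)` with `b = a+1`, and the YJM elements
`X_a, X_b`. -/
noncomputable def genSetA (G : Type*) [Group G] [Fintype G] (n : ℕ) (a b : Fin n) :
    Set (MonoidAlgebra ℂ (WreathProduct G n)) :=
  (Set.range fun f : Fin n → G =>
      MonoidAlgebra.of ℂ (WreathProduct G n) (SemidirectProduct.inl f)) ∪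
    {MonoidAlgebra.of ℂ (WreathProduct G n) (pIn (Equiv.swap a b)), YJM G n a, YJM G n b}

/-!
Under the left regular representation of `Γ = G ≀ Sₙ`, transported to the Hilbert space
`EuclideanSpace ℂ Γ`, the adjoint of a group element `g` is `g⁻¹`. Hence the generators of `A_i`
are closed under adjoints: `Gⁿ` is a group, `s_i` is an involution, and `X_j` is self-adjoint
because each of its summands `(g⁻¹)^{(k)} g^{(j)} (k,j)` is an involution. So `A_i` is a
subalgebra of `End(ℂ[Γ])` closed under adjoints, and orthogonal complements of invariant subspaces
are invariant, which makes it semisimple. Self-adjointness also makes the minimal polynomials of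
`X_i` and `X_{i+1}` squarefree, so both act semisimply on every `A_i`-module; since
Young–Jucys–Murphy elements commute, they are simultaneously diagonalizable.
-/

instance {N H : Type*} [Group N] [Group H] [Fintype N] [Fintype H] {φ : H →* MulAut N} :
    Fintype (N ⋊[φ] H) :=
  Fintype.ofEquiv _ SemidirectProduct.equivProd.symm

theorem MonoidAlgebra.commute_of_sum_of_of_semiconjBy {k H ι : Type*} [Semiring k] [Monoid H]
    {p : H} {t : ι → H} {s : Finset ι} (e : ι ≃ ι) (hs : ∀ x, x ∈ s ↔ e x ∈ s)
    (h : ∀ x ∈ s, SemiconjBy p (t x) (t (e x))) :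
    Commute (of k H p) (∑ x ∈ s, of k H (t x)) := by
  rw [Commute, SemiconjBy, Finset.mul_sum, Finset.sum_mul]
  exact Finset.sum_equiv e hs fun x hx => by rw [← map_mul, (h x hx).eq, map_mul]

section AdjointClosed
variable {𝕜 E : Type*} [RCLike 𝕜] [NormedAddCommGroup E] [InnerProductSpace 𝕜 E]
  [FiniteDimensional 𝕜 E]

theorem Subalgebra.isSemisimpleModule_of_adjoint_mem (S : Subalgebra 𝕜 (Module.End 𝕜 E))
    (hS : ∀ T ∈ S, T.adjoint ∈ S) : IsSemisimpleModule S E := by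
  refine { exists_isCompl := fun W => ?_ }
  let Wperp : Submodule S E :=
    { (W.restrictScalars 𝕜)ᗮ with
      smul_mem' := fun T v hv => by
        refine (Submodule.mem_orthogonal' _ _).2 fun w hw => ?_
        have hTw : (T : Module.End 𝕜 E).adjoint w ∈ W := W.smul_mem ⟨_, hS T T.2⟩ hw
        rw [Subalgebra.smul_def, Module.End.smul_def, ← LinearMap.adjoint_inner_right]
        exact (Submodule.mem_orthogonal' _ _).1 hv _ hTw }
  exact ⟨Wperp, (Submodule.isCompl_restrictScalars_iff 𝕜).1
    (Submodule.isCompl_orthogonal (W.restrictScalars 𝕜))⟩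

/-- `S` is faithful on `E`, so evaluation on a basis embeds `S` into the semisimple `S`-module
`E ^ dim E`. -/
theorem Subalgebra.isSemisimpleRing_of_adjoint_mem (S : Subalgebra 𝕜 (Module.End 𝕜 E))
    (hS : ∀ T ∈ S, T.adjoint ∈ S) : IsSemisimpleRing S := by
  have := isSemisimpleModule_of_adjoint_mem S hS
  let b := Module.finBasis 𝕜 E
  let evalBasis : S →ₗ[S] (Fin (Module.finrank 𝕜 E) → E) :=
    LinearMap.pi fun i => LinearMap.toSpanSingleton S E (b i)
  exact IsSemisimpleModule.of_injective evalBasis fun T T' h =>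
    Subtype.ext (b.ext fun i => congrFun h i)

variable {A : Type*} [Ring A] [Algebra 𝕜 A]

theorem Algebra.isSemisimpleRing_adjoin_of_adjoint_mem (ρ : A →ₐ[𝕜] Module.End 𝕜 E)
    (hρ : Function.Injective ρ) {s : Set A} (hs : ∀ x ∈ s, ∃ y ∈ s, (ρ x).adjoint = ρ y) :
    IsSemisimpleRing (Algebra.adjoin 𝕜 s) := by
  have hstar : star (ρ '' s) ⊆ ρ '' s := by
    rintro T ⟨x, hx, hxT⟩
    obtain ⟨y, hy, hxy⟩ := hs x hx
    exact ⟨y, hy, by rw [← hxy, ← LinearMap.star_eq_adjoint, hxT, star_star]⟩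
  have hS : ∀ T ∈ (Algebra.adjoin 𝕜 s).map ρ, T.adjoint ∈ (Algebra.adjoin 𝕜 s).map ρ := by
    intro T hT
    rw [AlgHom.map_adjoin] at hT ⊢
    have hT' : star T ∈ star (Algebra.adjoin 𝕜 (ρ '' s)) := by
      rwa [Subalgebra.mem_star_iff, star_star]
    rw [Subalgebra.star_adjoin_comm] at hT'
    exact LinearMap.star_eq_adjoint T ▸ Algebra.adjoin_mono hstar hT'
  have := Subalgebra.isSemisimpleRing_of_adjoint_mem _ hS
  exact (Subalgebra.equivMapOfInjective _ ρ hρ).toRingEquiv.symm.isSemisimpleRing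

theorem squarefree_minpoly_of_adjoint_eq_self (ρ : A →ₐ[𝕜] Module.End 𝕜 E)
    (hρ : Function.Injective ρ) {x : A} (hx : (ρ x).adjoint = ρ x) :
    Squarefree (minpoly 𝕜 x) := by
  have hsymm : (ρ x).IsSymmetric := (LinearMap.isSymmetric_iff_isSelfAdjoint _).2 <| by
    rw [IsSelfAdjoint, LinearMap.star_eq_adjoint, hx]
  rw [← minpoly.algHom_eq ρ hρ]
  exact (Module.End.isFinitelySemisimple_iff_isSemisimple.1
    hsymm.isFinitelySemisimple).minpoly_squarefree

end AdjointClosed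

namespace Module.End

theorem isSemisimple_lsmul_of_squarefree_minpoly {K A M : Type*} [Field K] [Ring A]
    [Algebra K A] [AddCommGroup M] [Module K M] [Module A M] [IsScalarTower K A M] {x : A}
    (hx : Squarefree (minpoly K x)) : (Algebra.lsmul K K M x).IsSemisimple :=
  isSemisimple_of_squarefree_aeval_eq_zero hx <| by
    rw [Polynomial.aeval_algHom_apply, minpoly.aeval, map_zero]

universe u
variable {K : Type*} {V : Type u} [Field K] [IsAlgClosed K] [AddCommGroup V] [Module K V]
  [FiniteDimensional K V]

theorem iSup_iInf_eigenspace_eq_top_of_pairwise_commute {ι : Type*} {f : ι → End K V}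
    (hcomm : Pairwise fun i j ↦ Commute (f i) (f j)) (hss : ∀ i, (f i).IsSemisimple) :
    ⨆ χ : ι → K, ⨅ i, (f i).eigenspace (χ i) = ⊤ := by
  simpa only [fun i μ ↦ (hss i).isFinitelySemisimple.maxGenEigenspace_eq_eigenspace μ] using
    iSup_iInf_maxGenEigenspace_eq_top_of_iSup_maxGenEigenspace_eq_top_of_commute f hcomm
      fun i ↦ iSup_maxGenEigenspace_eq_top (f i)

theorem exists_basis_eigenvectors_of_pairwise_commute {ι : Type*} {f : ι → End K V}
    (hcomm : Pairwise fun i j ↦ Commute (f i) (f j)) (hss : ∀ i, (f i).IsSemisimple) :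
    ∃ (κ : Type u) (_ : Fintype κ) (B : Basis κ K V), ∀ k i, ∃ c : K, f i (B k) = c • B k := by
  set s : Set V := ⋃ χ : ι → K, ↑(⨅ i, (f i).eigenspace (χ i))
  have hs : ⊤ ≤ Submodule.span K s := by
    simp only [s, Submodule.span_iUnion, Submodule.span_eq,
      iSup_iInf_eigenspace_eq_top_of_pairwise_commute hcomm hss, le_refl]
  let B := Basis.ofSpan hs
  have := Module.Finite.finite_basis B
  refine ⟨_, Fintype.ofFinite _, B, fun k i => ?_⟩
  obtain ⟨χ, hχ⟩ := Set.mem_iUnion.1 (Basis.ofSpan_subset hs ⟨k, rfl⟩)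
  exact ⟨χ i, mem_eigenspace_iff.1 ((Submodule.mem_iInf _).1 hχ i)⟩

theorem exists_basis_eigenvectors_of_commute {f g : End K V} (hf : f.IsSemisimple)
    (hg : g.IsSemisimple) (hfg : Commute f g) :
    ∃ (κ : Type u) (_ : Fintype κ) (B : Basis κ K V),
      ∀ k, (∃ c : K, f (B k) = c • B k) ∧ ∃ c : K, g (B k) = c • B k := by
  have hcomm : Pairwise fun i j ↦ Commute (cond i f g) (cond j f g) := by
    rintro (_ | _) (_ | _) h <;> first | exact absurd rfl h | exact hfg | exact hfg.symm
  obtain ⟨κ, hκ, B, hB⟩ := exists_basis_eigenvectors_of_pairwise_commute hcomm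
    (Bool.rec hg hf)
  exact ⟨κ, hκ, B, fun k => ⟨hB k true, hB k false⟩⟩

end Module.End

section LeftRegular
variable (H : Type*) [Group H] [Fintype H]

noncomputable def MonoidAlgebra.equivEuclideanSpace :
    MonoidAlgebra ℂ H ≃ₗ[ℂ] EuclideanSpace ℂ H :=
  MonoidAlgebra.coeffLinearEquiv ℂ ≪≫ₗ Finsupp.linearEquivFunOnFinite ℂ ℂ H ≪≫ₗ
    (WithLp.linearEquiv 2 ℂ (H → ℂ)).symm

noncomputable def leftRegularEnd : MonoidAlgebra ℂ H →ₐ[ℂ] Module.End ℂ (EuclideanSpace ℂ H) :=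
  ((MonoidAlgebra.equivEuclideanSpace H).conjAlgEquiv ℂ).toAlgHom.comp (Algebra.lmul ℂ _)

variable {H}

theorem leftRegularEnd_injective : Function.Injective (leftRegularEnd H) :=
  ((MonoidAlgebra.equivEuclideanSpace H).conjAlgEquiv ℂ).injective.comp Algebra.lmul_injective

theorem leftRegularEnd_of_apply (h : H) (u : EuclideanSpace ℂ H) (x : H) :
    leftRegularEnd H (MonoidAlgebra.of ℂ H h) u x = u (h⁻¹ * x) := by
  simp [leftRegularEnd, MonoidAlgebra.equivEuclideanSpace]

theorem adjoint_leftRegularEnd_of (h : H) :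
    (leftRegularEnd H (MonoidAlgebra.of ℂ H h)).adjoint =
      leftRegularEnd H (MonoidAlgebra.of ℂ H h⁻¹) := by
  refine ((LinearMap.eq_adjoint_iff _ _).2 fun u v => ?_).symm
  simp only [PiLp.inner_apply, leftRegularEnd_of_apply, inv_inv]
  exact Fintype.sum_equiv (Equiv.mulLeft h) _ _ fun x => by simp

end LeftRegular

section WreathProduct
variable {G : Type*} [Group G] {n : ℕ}
open SemidirectProduct

theorem wreathHom_apply (π : Equiv.Perm (Fin n)) (f : Fin n → G) (j : Fin n) :
    wreathHom G n π f j = f (π⁻¹ j) := rfl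

theorem wreathHom_mulSingle (π : Equiv.Perm (Fin n)) (k : Fin n) (x : G) :
    wreathHom G n π (Pi.mulSingle k x) = Pi.mulSingle (π k) x := by
  funext j
  simp only [wreathHom_apply, Pi.mulSingle_apply, Equiv.Perm.inv_eq_iff_eq]

theorem pIn_mul_pIn (π σ : Equiv.Perm (Fin n)) :
    (pIn π * pIn σ : WreathProduct G n) = pIn (π * σ) :=
  (map_mul _ _ _).symm

theorem pIn_mul_inl (π : Equiv.Perm (Fin n)) (f : Fin n → G) :
    pIn π * inl f = inl (wreathHom G n π f) * pIn π := by
  rw [pIn, inl_aut, map_inv, inv_mul_cancel_right]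

theorem semiconjBy_pIn_gAt (π : Equiv.Perm (Fin n)) (k : Fin n) (x : G) :
    SemiconjBy (pIn π) (gAt k x) (gAt (π k) x) := by
  rw [SemiconjBy, gAt, pIn_mul_inl, wreathHom_mulSingle, gAt]

theorem semiconjBy_pIn_swap (π : Equiv.Perm (Fin n)) (k i : Fin n) :
    SemiconjBy (pIn π : WreathProduct G n) (pIn (Equiv.swap k i))
      (pIn (Equiv.swap (π k) (π i))) := by
  rw [SemiconjBy, pIn_mul_pIn, pIn_mul_pIn, Equiv.mul_swap_eq_swap_mul]

/-- The summand `(g⁻¹)^{(k)} g^{(i)} (k,i)` of the Young–Jucys–Murphy element `X_i`. -/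
def coloredSwap (k i : Fin n) (g : G) : WreathProduct G n :=
  gAt k g⁻¹ * gAt i g * pIn (Equiv.swap k i)

theorem coloredSwap_eq_inl_mul_pIn (k i : Fin n) (g : G) :
    coloredSwap k i g = inl (Pi.mulSingle k g⁻¹ * Pi.mulSingle i g) * pIn (Equiv.swap k i) := by
  rw [coloredSwap, gAt, gAt, map_mul]

theorem coloredSwap_inv (k i : Fin n) (g : G) : (coloredSwap k i g)⁻¹ = coloredSwap k i g := by
  have hu : Pi.mulSingle k g⁻¹ * Pi.mulSingle i g *
      wreathHom G n (Equiv.swap k i) (Pi.mulSingle k g⁻¹ * Pi.mulSingle i g) = 1 := by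
    rw [map_mul, wreathHom_mulSingle, wreathHom_mulSingle, Equiv.swap_apply_left,
      Equiv.swap_apply_right, Pi.mulSingle_inv, Pi.mulSingle_inv]
    group
  refine inv_eq_of_mul_eq_one_right ?_
  rw [coloredSwap_eq_inl_mul_pIn, mul_assoc, ← mul_assoc (pIn _), pIn_mul_inl, mul_assoc,
    pIn_mul_pIn, Equiv.swap_mul_self, ← mul_assoc, ← map_mul, hu, pIn, map_one, map_one, one_mul]

theorem semiconjBy_pIn_coloredSwap (π : Equiv.Perm (Fin n)) (k i : Fin n) (g : G) :
    SemiconjBy (pIn π) (coloredSwap k i g) (coloredSwap (π k) (π i) g) :=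
  ((semiconjBy_pIn_gAt π k g⁻¹).mul_right (semiconjBy_pIn_gAt π i g)).mul_right
    (semiconjBy_pIn_swap π k i)

theorem semiconjBy_inl_coloredSwap (f : Fin n → G) (k i : Fin n) (g : G) :
    SemiconjBy (inl f) (coloredSwap k i g) (coloredSwap k i (f i * g * (f k)⁻¹)) := by
  have key : f * (Pi.mulSingle k g⁻¹ * Pi.mulSingle i g) =
      Pi.mulSingle k (f i * g * (f k)⁻¹)⁻¹ * Pi.mulSingle i (f i * g * (f k)⁻¹) *
        wreathHom G n (Equiv.swap k i) f := by
    funext j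
    simp only [Pi.mul_apply, Pi.mulSingle_apply, wreathHom_apply, Equiv.swap_inv,
      Equiv.swap_apply_def]
    split_ifs <;> simp_all [mul_assoc]
  rw [SemiconjBy, coloredSwap_eq_inl_mul_pIn, coloredSwap_eq_inl_mul_pIn, ← mul_assoc, ← map_mul,
    key, mul_assoc _ (pIn _), pIn_mul_inl, ← mul_assoc, ← map_mul]

end WreathProduct

section YoungJucysMurphy
variable {G : Type*} [Group G] [Fintype G] {n : ℕ}
open SemidirectProduct MonoidAlgebra

theorem YJM_eq_sum_coloredSwap (i : Fin n) :
    YJM G n i = ∑ x ∈ Finset.univ.filter (fun k => k < i) ×ˢ Finset.univ,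
      of ℂ (WreathProduct G n) (coloredSwap x.1 i x.2) := by
  rw [YJM, Finset.sum_product]
  rfl

theorem commute_of_inl_YJM (f : Fin n → G) (i : Fin n) :
    Commute (of ℂ (WreathProduct G n) (inl f)) (YJM G n i) := by
  rw [YJM_eq_sum_coloredSwap]
  refine commute_of_sum_of_of_semiconjBy
    (Equiv.prodShear (Equiv.refl _) fun k => (Equiv.mulLeft (f i)).trans (Equiv.mulRight (f k)⁻¹))
    (fun x => by simp) fun x _ => semiconjBy_inl_coloredSwap f x.1 i x.2

theorem commute_of_pIn_YJM {π : Equiv.Perm (Fin n)} {i : Fin n} (hπ : ∀ j, i ≤ j → π j = j) :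
    Commute (of ℂ (WreathProduct G n) (pIn π)) (YJM G n i) := by
  have hlt : ∀ k, k < i ↔ π k < i := fun k => by
    refine ⟨fun hk => not_le.1 fun hπk => ?_, fun hπk => not_le.1 fun hk => ?_⟩
    · rw [π.injective (hπ _ hπk)] at hπk
      exact hk.not_ge hπk
    · rw [hπ k hk] at hπk
      exact hπk.not_ge hk
  rw [YJM_eq_sum_coloredSwap]
  refine commute_of_sum_of_of_semiconjBy (Equiv.prodCongr π (Equiv.refl G)) (fun x => ?_)
    fun x _ => ?_
  · simpa only [Finset.mem_product, Finset.mem_filter, Finset.mem_univ, true_and, and_true,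
      Equiv.prodCongr_apply, Prod.map_fst]
      using hlt x.1
  · have h := semiconjBy_pIn_coloredSwap (G := G) π x.1 i x.2
    rwa [hπ i le_rfl] at h

theorem commute_of_coloredSwap_YJM {k a b : Fin n} (hka : k < a) (hab : a < b) (g : G) :
    Commute (of ℂ (WreathProduct G n) (coloredSwap k a g)) (YJM G n b) := by
  rw [coloredSwap_eq_inl_mul_pIn, map_mul]
  refine (commute_of_inl_YJM _ b).mul_left (commute_of_pIn_YJM fun j hj => ?_)
  exact Equiv.swap_apply_of_ne_of_ne (hka.trans hab |>.trans_le hj).ne' (hab.trans_le hj).ne'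

theorem YJM_commute_of_lt {a b : Fin n} (hab : a < b) : Commute (YJM G n a) (YJM G n b) := by
  rw [YJM_eq_sum_coloredSwap a]
  exact Commute.sum_left _ _ _ fun x hx =>
    commute_of_coloredSwap_YJM (Finset.mem_filter.1 (Finset.mem_product.1 hx).1).2 hab x.2

theorem YJM_commute (a b : Fin n) : Commute (YJM G n a) (YJM G n b) := by
  rcases lt_trichotomy a b with h | rfl | h
  exacts [YJM_commute_of_lt h, Commute.refl _, (YJM_commute_of_lt h).symm]

theorem adjoint_leftRegularEnd_YJM (i : Fin n) :
    (leftRegularEnd _ (YJM G n i)).adjoint = leftRegularEnd _ (YJM G n i) := by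
  simp only [YJM_eq_sum_coloredSwap, map_sum, adjoint_leftRegularEnd_of, coloredSwap_inv]

end YoungJucysMurphy

theorem exists_adjoint_leftRegularEnd_genSetA (G : Type*) [Group G] [Fintype G] (n : ℕ)
    (a b : Fin n) : ∀ x ∈ genSetA G n a b,
      ∃ y ∈ genSetA G n a b, (leftRegularEnd _ x).adjoint = leftRegularEnd _ y := by
  rintro _ (⟨f, rfl⟩ | hx)
  · exact ⟨_, Or.inl ⟨f⁻¹, rfl⟩, by rw [adjoint_leftRegularEnd_of, ← map_inv]⟩
  · simp only [Set.mem_insert_iff, Set.mem_singleton_iff] at hx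
    rcases hx with rfl | rfl | rfl
    · refine ⟨_, Or.inr (Set.mem_insert _ _), ?_⟩
      rw [adjoint_leftRegularEnd_of, pIn, ← map_inv, Equiv.swap_inv]
    · exact ⟨_, Or.inr (by simp), adjoint_leftRegularEnd_YJM a⟩
    · exact ⟨_, Or.inr (by simp), adjoint_leftRegularEnd_YJM b⟩

/-- The subalgebra `A_i` of `ℂ[G≀Sₙ]` generated by `Gⁿ`, the Coxeter
transposition `s_i` and the YJM elements `X_i, X_{i+1}` is semisimple, and on every
finite-dimensional `A_i`-module the actions of `X_i` and `X_{i+1}` are simultaneously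
diagonalizable. -/
theorem Ai_semisimple_and_simultaneously_diagonalizable (G : Type) [Group G] [Fintype G]
    (n : ℕ) (a b : Fin n) :
    IsSemisimpleRing (Algebra.adjoin ℂ (genSetA G n a b)) ∧
    (∀ (V : Type) [AddCommGroup V] [Module ℂ V]
        [Module (Algebra.adjoin ℂ (genSetA G n a b)) V]
        [IsScalarTower ℂ (Algebra.adjoin ℂ (genSetA G n a b)) V] [FiniteDimensional ℂ V],
      ∃ (ι : Type) (_ : Fintype ι) (B : Module.Basis ι ℂ V), ∀ x : ι,
        (∃ c : ℂ, (⟨YJM G n a, Algebra.subset_adjoin (by simp [genSetA])⟩ :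
            Algebra.adjoin ℂ (genSetA G n a b)) • B x = c • B x) ∧
        (∃ c : ℂ, (⟨YJM G n b, Algebra.subset_adjoin (by simp [genSetA])⟩ :
            Algebra.adjoin ℂ (genSetA G n a b)) • B x = c • B x)) := by
  let A := Algebra.adjoin ℂ (genSetA G n a b)
  let ρ := (leftRegularEnd (WreathProduct G n)).comp A.val
  have hρ : Function.Injective ρ := leftRegularEnd_injective.comp Subtype.val_injective
  refine ⟨Algebra.isSemisimpleRing_adjoin_of_adjoint_mem _ leftRegularEnd_injective
    (exists_adjoint_leftRegularEnd_genSetA G n a b), fun V _ _ _ _ _ => ?_⟩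
  have ha : YJM G n a ∈ A := Algebra.subset_adjoin (by simp [genSetA])
  have hb : YJM G n b ∈ A := Algebra.subset_adjoin (by simp [genSetA])
  have hsemisimple (i : Fin n) (hi : YJM G n i ∈ A) :
      (Algebra.lsmul ℂ ℂ V (⟨YJM G n i, hi⟩ : A)).IsSemisimple :=
    Module.End.isSemisimple_lsmul_of_squarefree_minpoly
      (squarefree_minpoly_of_adjoint_eq_self ρ hρ (adjoint_leftRegularEnd_YJM i))
  have hcomm : Commute (⟨YJM G n a, ha⟩ : A) ⟨YJM G n b, hb⟩ := Subtype.ext (YJM_commute a b).eq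
  exact Module.End.exists_basis_eigenvectors_of_commute (hsemisimple a ha) (hsemisimple b hb)
    (hcomm.map _)
end
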